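/- arXiv:1212.6019 — 3 statements merged into one kernel-verified Lean document; each statement's English description precedes it below -/
import Mathlib

section
/- If a group G acts on a finite nonempty connected tree (a finite connected simple graph with no cycles) by graph automorphisms, then G fixes a vertex or fixes an edge (as an unordered pair of vertices). -/
/-!
Prune all leaves of the tree at once. The vertices with at least two neighbours form a subtree
(removing leaves keeps a graph connected), the action preserves it, and it is smaller because
a finite tree has a leaf; so induction on the number of vertices applies, unless no vertex has two
neighbours. In that case the tree is a single vertex or a single edge, which the group fixes.
-/

namespace SimpleGraph

def FixesVertexOrEdge {V : Type*} (G : SimpleGraph V) (Γ : Type*) [SMul Γ V] : Prop :=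
  (∃ v : V, ∀ γ : Γ, γ • v = v) ∨ ∃ u v : V, G.Adj u v ∧ ∀ γ : Γ, s(γ • u, γ • v) = s(u, v)

variable {V : Type*} {G : SimpleGraph V} {Γ : Type*} [Group Γ] [MulAction Γ V]

lemma FixesVertexOrEdge.of_induce (s : SubMulAction Γ V)
    (h : (G.induce (s : Set V)).FixesVertexOrEdge Γ) : G.FixesVertexOrEdge Γ := by
  rcases h with ⟨v, hv⟩ | ⟨u, v, huv, hfix⟩
  · exact .inl ⟨v, fun γ ↦ congrArg Subtype.val (hv γ)⟩
  · exact .inr ⟨u, v, huv, fun γ ↦ by simpa using congrArg (Sym2.map Subtype.val) (hfix γ)⟩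

variable (G) in
def nonLeaves (hact : ∀ (γ : Γ) (u v : V), G.Adj (γ • u) (γ • v) ↔ G.Adj u v) :
    SubMulAction Γ V where
  carrier := {v | (G.neighborSet v).Nontrivial}
  smul_mem' γ v := by
    rintro ⟨a, ha, b, hb, hab⟩
    exact ⟨γ • a, (hact γ v a).2 ha, γ • b, (hact γ v b).2 hb, (MulAction.injective γ).ne hab⟩

lemma IsTree.exists_subsingleton_neighborSet [Finite V] (hG : G.IsTree) :
    ∃ v, (G.neighborSet v).Subsingleton := by
  classical
  have := Fintype.ofFinite V
  cases subsingleton_or_nontrivial V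
  · obtain ⟨v⟩ := hG.connected.nonempty
    exact ⟨v, Set.subsingleton_of_subsingleton⟩
  · obtain ⟨v, hv⟩ := hG.exists_vert_degree_one_of_nontrivial
    obtain ⟨u, -, hu⟩ := degree_eq_one_iff_existsUnique_adj.1 hv
    exact ⟨v, fun a ha b hb ↦ (hu a ha).trans (hu b hb).symm⟩

lemma IsTree.induce_setOf_neighborSet_nontrivial (hG : G.IsTree)
    (hs : {v | (G.neighborSet v).Nontrivial}.Nonempty) :
    (G.induce {v | (G.neighborSet v).Nontrivial}).IsTree :=
  ⟨(connected_iff _).2 ⟨hG.connected.preconnected.induce_of_degree_eq_one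
    fun _ hv ↦ Set.not_nontrivial_iff.1 hv, hs.to_subtype⟩, hG.isAcyclic.induce _⟩

lemma Connected.adj_of_forall_subsingleton_neighborSet (hG : G.Connected)
    (h : ∀ v, (G.neighborSet v).Subsingleton) {x y : V} (hxy : x ≠ y) : G.Adj x y := by
  obtain ⟨p, hp⟩ := hG.exists_isPath x y
  have hsnd := p.adj_snd (Walk.not_nil_of_ne hxy)
  by_contra hxy'
  exact hp.isTrail.not_mem_support_of_subsingleton_neighborSet hsnd.ne'
    (fun hsy ↦ hxy' (hsy ▸ hsnd)) (h _) (p.getVert_mem_support 1)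

lemma Connected.fixesVertexOrEdge_of_forall_subsingleton_neighborSet (hG : G.Connected)
    (h : ∀ v, (G.neighborSet v).Subsingleton) : G.FixesVertexOrEdge Γ := by
  cases subsingleton_or_nontrivial V
  · obtain ⟨v⟩ := hG.nonempty
    exact .inl ⟨v, fun _ ↦ Subsingleton.elim _ _⟩
  · obtain ⟨x, y, hxy⟩ := exists_pair_ne V
    have hadj := hG.adj_of_forall_subsingleton_neighborSet h hxy
    have hmem (z : V) : z = x ∨ z = y := by
      by_cases hzx : z = x
      · exact .inl hzx
      · exact .inr (h x (hG.adj_of_forall_subsingleton_neighborSet h (Ne.symm hzx)) hadj)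
    refine .inr ⟨x, y, hadj, fun γ ↦ ?_⟩
    have hne : γ • x ≠ γ • y := (MulAction.injective γ).ne hxy
    rcases hmem (γ • x) with hγx | hγx <;> rcases hmem (γ • y) with hγy | hγy <;>
      simp_all [Sym2.eq_swap]

theorem IsTree.fixesVertexOrEdge [Finite V] (hG : G.IsTree)
    (hact : ∀ (γ : Γ) (u v : V), G.Adj (γ • u) (γ • v) ↔ G.Adj u v) :
    G.FixesVertexOrEdge Γ := by
  induction h : Nat.card V using Nat.strong_induction_on generalizing V with
  | _ n ih =>
  by_cases hS : {v | (G.neighborSet v).Nontrivial}.Nonempty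
  · obtain ⟨v, hv⟩ := hG.exists_subsingleton_neighborSet
    have hlt : Nat.card (G.nonLeaves hact) < n :=
      h ▸ Finite.card_subtype_lt (p := (· ∈ G.nonLeaves hact)) (x := v) hv.not_nontrivial
    exact .of_induce _ <|
      ih _ hlt (hG.induce_setOf_neighborSet_nontrivial hS) (fun γ u v ↦ hact γ u v) rfl
  · exact hG.connected.fixesVertexOrEdge_of_forall_subsingleton_neighborSet
      fun v ↦ Set.not_nontrivial_iff.1 fun hv ↦ hS ⟨v, hv⟩

end SimpleGraph

theorem stmt_0_general {V : Type*} [Fintype V] (G : SimpleGraph V)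
    (hconn : G.Connected) (hacyc : G.IsAcyclic)
    {Γ : Type*} [Group Γ] [MulAction Γ V]
    (hact : ∀ (γ : Γ) (u v : V), G.Adj (γ • u) (γ • v) ↔ G.Adj u v) :
    (∃ v : V, ∀ γ : Γ, γ • v = v) ∨
      (∃ u v : V, G.Adj u v ∧ ∀ γ : Γ, s(γ • u, γ • v) = s(u, v)) :=
  SimpleGraph.IsTree.fixesVertexOrEdge ⟨hconn, hacyc⟩ hact

/-- If a group `Γ` acts on a finite nonempty connected tree (a finite connected
simple graph with no cycles) by graph automorphisms, then `Γ` fixes a vertex or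
fixes an edge (as an unordered pair of adjacent vertices). -/
theorem stmt_0 {V : Type*} [Fintype V] [Nonempty V] (G : SimpleGraph V)
    (hconn : G.Connected) (hacyc : G.IsAcyclic)
    {Γ : Type*} [Group Γ] [MulAction Γ V]
    (hact : ∀ (γ : Γ) (u v : V), G.Adj (γ • u) (γ • v) ↔ G.Adj u v) :
    (∃ v : V, ∀ γ : Γ, γ • v = v) ∨
      (∃ u v : V, G.Adj u v ∧ ∀ γ : Γ, s(γ • u, γ • v) = s(u, v)) :=
  stmt_0_general G hconn hacyc hact
end

section
/- Let R be a commutative ring given as a pullback (fiber product) of commutative rings R1 ×_S R2 along ring homomorphisms f1 : R1 → S and f2 : R2 → S, where f2 is surjective. Then the induced square of unit groups is a pullback: R^× is isomorphic to the fiber product of R1^× and R2^× over S^×, i.e., the group of pairs (u1, u2) with f1(u1) = f2(u2). -/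
/-! Ring maps send inverses to inverses, so if `f₁ u₁ = f₂ u₂` for units `u₁, u₂` then also
`f₁ u₁⁻¹ = f₂ u₂⁻¹`; hence `(u₁, u₂)` and its inverse both lie in the fiber product. -/

theorem map_inv_eq_of_map_eq {M N F : Type*} [Monoid M] [Monoid N] [FunLike F M N]
    [MonoidHomClass F M N] (f g : F) (u : Mˣ) (h : f u = g u) : f ↑u⁻¹ = g ↑u⁻¹ := by
  have hu : Units.map (f : M →* N) u = Units.map (g : M →* N) u := Units.ext h
  simpa using congrArg (fun v : Nˣ => ((v⁻¹ : Nˣ) : N)) hu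

theorem RingHom.isUnit_mk_eqLocus {A B : Type*} [Ring A] [Ring B] {φ ψ : A →+* B} {a : A}
    (ha : a ∈ φ.eqLocus ψ) (hu : IsUnit a) : IsUnit (⟨a, ha⟩ : φ.eqLocus ψ) := by
  obtain ⟨u, rfl⟩ := hu
  have hinv : (↑u⁻¹ : A) ∈ φ.eqLocus ψ := map_inv_eq_of_map_eq φ ψ u ha
  exact ⟨⟨⟨u, ha⟩, ⟨_, hinv⟩, Subtype.ext u.mul_inv, Subtype.ext u.inv_mul⟩, rfl⟩

theorem stmt_2_general (R₁ R₂ S : Type*) [CommRing R₁] [CommRing R₂] [CommRing S]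
    (f₁ : R₁ →+* S) (f₂ : R₂ →+* S) :
    let R : Subring (R₁ × R₂) :=
      RingHom.eqLocus (f₁.comp (RingHom.fst R₁ R₂)) (f₂.comp (RingHom.snd R₁ R₂))
    let g₁ : R →+* R₁ := (RingHom.fst R₁ R₂).comp R.subtype
    let g₂ : R →+* R₂ := (RingHom.snd R₁ R₂).comp R.subtype
    let Φ : Rˣ →* R₁ˣ × R₂ˣ :=
      (Units.map g₁.toMonoidHom).prod (Units.map g₂.toMonoidHom)
    Function.Injective Φ ∧
      Set.range Φ =
        {p : R₁ˣ × R₂ˣ |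
          Units.map f₁.toMonoidHom p.1 = Units.map f₂.toMonoidHom p.2} := by
  intro R g₁ g₂ Φ
  refine ⟨fun u v huv => ?_, Set.ext fun p => ⟨?_, fun hp => ?_⟩⟩
  · have h₁ : (g₁ u : R₁) = g₁ v := congrArg (fun w => (w.1 : R₁)) huv
    have h₂ : (g₂ u : R₂) = g₂ v := congrArg (fun w => (w.2 : R₂)) huv
    exact Units.ext (Subtype.ext (Prod.ext h₁ h₂))
  · rintro ⟨u, rfl⟩
    exact Units.ext (u : R).2
  · have hmem : ((p.1 : R₁), (p.2 : R₂)) ∈ R := congrArg Units.val hp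
    obtain ⟨u, hu⟩ :=
      RingHom.isUnit_mk_eqLocus hmem (Prod.isUnit_iff.2 ⟨p.1.isUnit, p.2.isUnit⟩)
    refine ⟨u, Prod.ext (Units.ext ?_) (Units.ext ?_)⟩ <;> simp [Φ, g₁, g₂, hu]

/-- Let `R = R₁ ×_S R₂` be the fiber product of commutative rings along
`f₁ : R₁ → S` and `f₂ : R₂ → S` with `f₂` surjective. Then the induced square
of unit groups is a pullback: the natural map `Rˣ → R₁ˣ × R₂ˣ` is injective
with image exactly the pairs `(u₁, u₂)` with `f₁(u₁) = f₂(u₂)`; that is, `Rˣ`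
is isomorphic to the fiber product `R₁ˣ ×_{Sˣ} R₂ˣ`. -/
theorem stmt_2 (R₁ R₂ S : Type*) [CommRing R₁] [CommRing R₂] [CommRing S]
    (f₁ : R₁ →+* S) (f₂ : R₂ →+* S) (hf₂ : Function.Surjective f₂) :
    let R : Subring (R₁ × R₂) :=
      RingHom.eqLocus (f₁.comp (RingHom.fst R₁ R₂)) (f₂.comp (RingHom.snd R₁ R₂))
    let g₁ : R →+* R₁ := (RingHom.fst R₁ R₂).comp R.subtype
    let g₂ : R →+* R₂ := (RingHom.snd R₁ R₂).comp R.subtype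
    let Φ : Rˣ →* R₁ˣ × R₂ˣ :=
      (Units.map g₁.toMonoidHom).prod (Units.map g₂.toMonoidHom)
    Function.Injective Φ ∧
      Set.range Φ =
        {p : R₁ˣ × R₂ˣ |
          Units.map f₁.toMonoidHom p.1 = Units.map f₂.toMonoidHom p.2} :=
  stmt_2_general R₁ R₂ S f₁ f₂
end

section
/- Let k = Q, a = 2, b = 17, c = 34. Then the scheme Z ⊂ P^1_Q defined by (x²−2y²)(x²−17y²)(x²−34y²) = 0 has no Q-rational points but has Q_p-points for all primes p and real points, i.e., 2, 17 or 34 is a square in every completion Q_v of Q, while none of 2, 17, 34 is a square in Q. -/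
/-!
None of 2, 17, 34 is the square of an integer, hence of a rational, while 2 > 0 is a real square.
For a prime `p`, Hensel's lemma for `X² - a` lifts squares: at `p = 2` every `a ≡ 1 (mod 8)`,
in particular 17, is a 2-adic square; at odd `p` a `p`-adic unit that is a square mod `p` is a
`p`-adic square. At `p = 17` this applies to `2 ≡ 6²`. At any other odd `p`, both 2 and 17 are
units, and since the quadratic character of `𝔽_p` is multiplicative, one of 2, 17, 34 = 2·17 is a
square mod `p`.
-/

theorem FiniteField.isSquare_or_isSquare_or_isSquare_mul {F : Type*} [Field F] [Fintype F]
    (a b : F) : IsSquare a ∨ IsSquare b ∨ IsSquare (a * b) := by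
  classical
  by_contra! h
  obtain ⟨ha, hb, hab⟩ := h
  rw [← quadraticChar_neg_one_iff_not_isSquare] at ha hb hab
  rw [map_mul, ha, hb] at hab
  norm_num at hab

theorem Int.natCast_not_dvd_of_prime_of_ne {p q : ℕ} (hp : p.Prime) (hq : q.Prime) (h : p ≠ q) :
    ¬ (p : ℤ) ∣ q := by
  exact_mod_cast (Nat.prime_dvd_prime_iff_eq hp hq).not.mpr h

namespace PadicInt

variable {p : ℕ} [Fact p.Prime]

open Polynomial in
theorem isSquare_of_norm_mul_self_sub_lt {a r : ℤ_[p]} (h : ‖r * r - a‖ < ‖2 * r‖ ^ 2) :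
    IsSquare a := by
  have heval : (X ^ 2 - C a).eval r = r * r - a := by simp [sq]
  have hderiv : (derivative (X ^ 2 - C a)).eval r = 2 * r := by simp [one_add_one_eq_two]
  obtain ⟨z, hz, -⟩ := hensels_lemma (F := X ^ 2 - C a) (a := r)
    (by rwa [coe_aeval_eq_eval, heval, hderiv])
  exact ⟨z, (eq_of_sub_eq_zero (by simpa [sq] using hz)).symm⟩

theorem isSquare_intCast_of_dvd_mul_self_sub (hp : p ≠ 2) {a x : ℤ} (ha : ¬ (p : ℤ) ∣ a)
    (hx : (p : ℤ) ∣ x * x - a) : IsSquare (a : ℤ_[p]) := by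
  have hprime : Prime (p : ℤ) := Nat.prime_iff_prime_int.mp Fact.out
  have hpx : ¬ (p : ℤ) ∣ x := fun h ↦ ha <| by simpa using dvd_sub (h.mul_left x) hx
  have hp2 : ¬ (p : ℤ) ∣ 2 := by
    simpa using Int.natCast_not_dvd_of_prime_of_ne Fact.out Nat.prime_two hp
  have hunit : ‖((2 * x : ℤ) : ℤ_[p])‖ = 1 := by
    rw [norm_intCast_eq_one_iff, isCoprime_comm, hprime.coprime_iff_not_dvd, hprime.dvd_mul]
    tauto
  have hlt : ‖((x * x - a : ℤ) : ℤ_[p])‖ < 1 := norm_intCast_lt_one_iff.mpr hx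
  push_cast at hunit hlt
  apply isSquare_of_norm_mul_self_sub_lt (r := x)
  rwa [hunit, one_pow]

theorem isSquare_intCast_of_modEq_one_eight {a : ℤ} (ha : a ≡ 1 [ZMOD 8]) :
    IsSquare (a : ℤ_[2]) := by
  have h8 : ‖((1 - a : ℤ) : ℤ_[2])‖ ≤ (2 : ℝ) ^ (-3 : ℤ) :=
    norm_int_le_pow_iff_dvd.mpr (Int.ModEq.dvd ha)
  have h2 : ‖(2 : ℤ_[2])‖ = 2⁻¹ := by simpa using norm_p (p := 2)
  apply isSquare_of_norm_mul_self_sub_lt (r := 1)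
  push_cast at h8
  simp only [mul_one, h2]
  norm_num at h8 ⊢
  linarith

end PadicInt

namespace Padic

variable {p : ℕ} [Fact p.Prime]

theorem isSquare_intCast_of_modEq_one_eight {a : ℤ} (ha : a ≡ 1 [ZMOD 8]) :
    IsSquare (a : ℚ_[2]) := by
  simpa using (PadicInt.isSquare_intCast_of_modEq_one_eight ha).map PadicInt.Coe.ringHom

theorem isSquare_intCast_of_isSquare_zmod (hp : p ≠ 2) {a : ℤ} (ha : ¬ (p : ℤ) ∣ a)
    (h : IsSquare (a : ZMod p)) : IsSquare (a : ℚ_[p]) := by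
  obtain ⟨y, hy⟩ := h
  have hdvd : (p : ℤ) ∣ y.cast * y.cast - a := by
    rw [← ZMod.intCast_eq_intCast_iff_dvd_sub]
    push_cast
    exact hy
  simpa using
    (PadicInt.isSquare_intCast_of_dvd_mul_self_sub hp ha hdvd).map PadicInt.Coe.ringHom

theorem isSquare_intCast_or_isSquare_intCast_or_isSquare_mul (hp : p ≠ 2) {a b : ℤ}
    (ha : ¬ (p : ℤ) ∣ a) (hb : ¬ (p : ℤ) ∣ b) :
    IsSquare (a : ℚ_[p]) ∨ IsSquare (b : ℚ_[p]) ∨ IsSquare ((a : ℚ_[p]) * b) := by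
  have hprime : Prime (p : ℤ) := Nat.prime_iff_prime_int.mp Fact.out
  have hab : ¬ (p : ℤ) ∣ a * b := by rw [hprime.dvd_mul]; tauto
  rcases FiniteField.isSquare_or_isSquare_or_isSquare_mul (a : ZMod p) b with h | h | h
  · exact Or.inl (isSquare_intCast_of_isSquare_zmod hp ha h)
  · exact Or.inr (Or.inl (isSquare_intCast_of_isSquare_zmod hp hb h))
  · exact Or.inr (Or.inr (mod_cast isSquare_intCast_of_isSquare_zmod hp hab (mod_cast h)))

end Padic

/-- The zero-dimensional scheme `Z ⊂ P¹_ℚ` cut out by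
`(x² − 2y²)(x² − 17y²)(x² − 34y²) = 0` has points in every completion of `ℚ`
but no rational points: none of `2, 17, 34` is a square in `ℚ`, yet for every
prime `p` one of `2, 17, 34` is a square in `ℚ_p`, and one of them is a square
in `ℝ`. -/
theorem stmt_8 :
    (¬ IsSquare (2 : ℚ)) ∧ (¬ IsSquare (17 : ℚ)) ∧ (¬ IsSquare (34 : ℚ)) ∧
      (∀ (p : ℕ) [Fact p.Prime],
        IsSquare (2 : ℚ_[p]) ∨ IsSquare (17 : ℚ_[p]) ∨ IsSquare (34 : ℚ_[p])) ∧
      (IsSquare (2 : ℝ) ∨ IsSquare (17 : ℝ) ∨ IsSquare (34 : ℝ)) := by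
  refine ⟨by norm_num, by norm_num, by norm_num, fun p hp ↦ ?_,
    Or.inl (Real.isSquare_iff.mpr zero_le_two)⟩
  rcases eq_or_ne p 2 with rfl | hp2
  · exact Or.inr (Or.inl (by simpa using Padic.isSquare_intCast_of_modEq_one_eight (a := 17) rfl))
  rcases eq_or_ne p 17 with rfl | hp17
  · have h2 : IsSquare ((2 : ℤ) : ZMod 17) := ⟨6, rfl⟩
    replace h2 := Padic.isSquare_intCast_of_isSquare_zmod hp2 (by decide) h2
    exact Or.inl (by simpa using h2)
  have h2 := Int.natCast_not_dvd_of_prime_of_ne hp.out Nat.prime_two hp2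
  have h17 := Int.natCast_not_dvd_of_prime_of_ne hp.out (by norm_num : Nat.Prime 17) hp17
  have := Padic.isSquare_intCast_or_isSquare_intCast_or_isSquare_mul hp2 h2 h17
  norm_num at this
  exact this
end
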